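/- Let C = ℤ₂ (the 2-adic integers with the standard 2-adic ultrametric) with a Borel probability measure μ, and let T : C → C be a measure-preserving transformation that is totally ergodic and uniformly rigid along some sequence (n_k). Then μ is a Dirac measure concentrated at a single point. -/

import Mathlib

open Filter MeasureTheory

private lemma fiber_iff (m : ℕ) (a b : ℤ_[2]) :
    PadicInt.toZModPow m a = PadicInt.toZModPow m b ↔ ‖a - b‖ ≤ (2 : ℝ) ^ (-(m : ℤ)) := by
  rw [← sub_eq_zero, ← map_sub, ← RingHom.mem_ker, PadicInt.ker_toZModPow,
    ← PadicInt.norm_le_pow_iff_mem_span_pow]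
  norm_num

/-- On the 2-adic integers (Cantor space with its standard ultrametric), a
measure-preserving, totally ergodic, uniformly rigid transformation forces the Borel
probability measure to be a Dirac mass at a single point. -/
theorem stmt_7 [MeasurableSpace ℤ_[2]] [BorelSpace ℤ_[2]]
    (μ : Measure ℤ_[2]) [IsProbabilityMeasure μ]
    (T : ℤ_[2] → ℤ_[2]) (hT : MeasurePreserving T μ μ)
    (hte : ∀ m : ℕ, 1 ≤ m → Ergodic (T^[m]) μ)
    (n : ℕ → ℕ) (hn : Tendsto n atTop atTop)
    (hrig : ∀ ε > 0, ∃ K, ∀ k ≥ K, ∀ x : ℤ_[2], dist (T^[n k] x) x < ε) :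
    ∃ x : ℤ_[2], μ = Measure.dirac x := by
  have key : ∀ m : ℕ, ∃ c : ℤ_[2], μ (Metric.closedBall c ((2 : ℝ) ^ (-(m : ℤ)))) = 1 := by
    intro m
    have hε : (0 : ℝ) < (2 : ℝ) ^ (-(m : ℤ)) := zpow_pos (by norm_num) _
    obtain ⟨K, hK⟩ := hrig _ hε
    obtain ⟨k, hk1, hkK⟩ := ((hn.eventually_ge_atTop 1).and (eventually_ge_atTop K)).exists
    set S := T^[n k] with hS
    have hSE : Ergodic S μ := hte (n k) hk1
    set f := PadicInt.toZModPow (p := 2) m with hf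
    have hfS : ∀ x, f (S x) = f x := by
      intro x
      exact (fiber_iff m (S x) x).mpr (le_of_lt (by rw [← dist_eq_norm]; exact hK k hkK x))
    set A : ZMod (2 ^ m) → Set ℤ_[2] := fun a => f ⁻¹' {a} with hA
    have hball : ∀ a c, c ∈ A a → A a = Metric.closedBall c ((2 : ℝ) ^ (-(m : ℤ))) := by
      intro a c hc
      ext y
      simp only [hA, Set.mem_preimage, Set.mem_singleton_iff, Metric.mem_closedBall,
        dist_eq_norm]
      rw [← hc, ← fiber_iff m]
    have hmeas : ∀ a, MeasurableSet (A a) := by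
      intro a
      rcases Set.eq_empty_or_nonempty (A a) with h | ⟨c, hc⟩
      · simp [h]
      · rw [hball a c hc]; exact Metric.isClosed_closedBall.measurableSet
    have hinv : ∀ a, S ⁻¹' A a = A a := by
      intro a; ext x
      simp [hA, Set.mem_preimage, hfS x]
    have hdic : ∀ a, μ (A a) = 0 ∨ μ (A a) = 1 := fun a =>
      hSE.toPreErgodic.prob_eq_zero_or_one (hmeas a) (hinv a)
    have hone : ∃ a, μ (A a) = 1 := by
      by_contra h
      push_neg at h
      have hz : ∀ a, μ (A a) = 0 := fun a => (hdic a).resolve_right (h a)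
      have huniv : (Set.univ : Set ℤ_[2]) = ⋃ a, A a := by
        ext x; simp [hA]
      have : (1 : ENNReal) ≤ 0 := by
        calc (1 : ENNReal) = μ Set.univ := (measure_univ).symm
        _ = μ (⋃ a, A a) := by rw [huniv]
        _ ≤ ∑' a, μ (A a) := measure_iUnion_le _
        _ = 0 := by simp [hz]
      simp at this
    obtain ⟨a, ha⟩ := hone
    obtain ⟨c, hc⟩ := nonempty_of_measure_ne_zero (ha ▸ one_ne_zero)
    exact ⟨c, (hball a c hc) ▸ ha⟩
  choose c hc using key
  set B : ℕ → Set ℤ_[2] := fun m => Metric.closedBall (c m) ((2 : ℝ) ^ (-(m : ℤ))) with hB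
  have hBm : ∀ m, MeasurableSet (B m) := fun m => Metric.isClosed_closedBall.measurableSet
  have hIc : μ (⋂ m, B m)ᶜ = 0 := by
    rw [Set.compl_iInter]
    exact measure_iUnion_null fun m => (prob_compl_eq_zero_iff (hBm m)).mpr (hc m)
  have hI : μ (⋂ m, B m) = 1 :=
    (prob_compl_eq_zero_iff (MeasurableSet.iInter fun m => hBm m)).mp hIc
  obtain ⟨x, hx⟩ := nonempty_of_measure_ne_zero (hI ▸ one_ne_zero)
  have hsub : (⋂ m, B m) ⊆ {x} := by
    intro y hy
    have hd : ∀ m : ℕ, dist y x ≤ (2 : ℝ) ^ (-(m : ℤ)) := by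
      intro m
      have hym := Set.mem_iInter.mp hy m
      have hxm := Set.mem_iInter.mp hx m
      rw [Metric.mem_closedBall, dist_eq_norm] at hym hxm
      have : y - x = (y - c m) + (c m - x) := by ring
      rw [dist_eq_norm, this]
      refine (PadicInt.nonarchimedean _ _).trans (max_le hym ?_)
      rw [← norm_neg]; simpa using hxm
    have htend : Tendsto (fun m : ℕ => (2 : ℝ) ^ (-(m : ℤ))) atTop (nhds 0) := by
      have h2 := tendsto_pow_atTop_nhds_zero_of_lt_one (by norm_num : (0:ℝ) ≤ 1/2)
        (by norm_num : (1/2 : ℝ) < 1)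
      refine h2.congr fun m => ?_
      rw [zpow_neg, zpow_natCast, one_div, inv_pow]
    have : dist y x ≤ 0 := ge_of_tendsto htend (Eventually.of_forall hd)
    simpa [Set.mem_singleton_iff] using dist_le_zero.mp this
  have hxs : μ {x} = 1 := le_antisymm prob_le_one (hI ▸ measure_mono hsub)
  refine ⟨x, ?_⟩
  ext s hs
  rw [Measure.dirac_apply' _ hs]
  by_cases hxin : x ∈ s
  · rw [Set.indicator_of_mem hxin, Pi.one_apply]
    refine le_antisymm prob_le_one ?_
    calc (1:ENNReal) = μ {x} := hxs.symm
    _ ≤ μ s := measure_mono (Set.singleton_subset_iff.mpr hxin)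
  · rw [Set.indicator_of_notMem hxin]
    refine le_antisymm ?_ zero_le
    have : s ⊆ {x}ᶜ := fun y hy => by
      simp only [Set.mem_compl_iff, Set.mem_singleton_iff]
      rintro rfl; exact hxin hy
    calc μ s ≤ μ {x}ᶜ := measure_mono this
    _ = 0 := (prob_compl_eq_zero_iff (measurableSet_singleton x)).mpr hxs
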